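/- arXiv:2003.02560 — 11 statements merged into one kernel-verified Lean document; each statement's English description precedes it below -/
import Mathlib

section
/- If a ring homomorphism R → S has the prime extension property and W is a multiplicative subset of R, then the induced map W⁻¹R → W⁻¹S (localization of both rings at W, where S is localized at the image of W) also has the prime extension property. -/
/-!
Every prime of `W⁻¹R` is extended from its contraction to `R`, so the map `W⁻¹R → W⁻¹S` has the
prime extension property as soon as the composite `R → S → W⁻¹S` has it. That composite is `f`
followed by a localization map, and localization maps have the property: an extended prime either
meets the submonoid, giving the unit ideal, or is disjoint from it and stays prime.
-/

/-- A ring homomorphism has the prime extension property if every prime ideal of the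
source extends to a prime ideal or the unit ideal of the target. -/
def PrimeExtensionProperty {R S : Type*} [CommRing R] [CommRing S] (f : R →+* S) : Prop :=
  ∀ P : Ideal R, P.IsPrime → (P.map f).IsPrime ∨ P.map f = ⊤

namespace PrimeExtensionProperty

variable {R S T : Type*} [CommRing R] [CommRing S] [CommRing T]

theorem comp {f : R →+* S} {g : S →+* T} (hf : PrimeExtensionProperty f)
    (hg : PrimeExtensionProperty g) : PrimeExtensionProperty (g.comp f) := by
  intro P hP
  rw [← Ideal.map_map]
  rcases hf P hP with hprime | htop
  · exact hg _ hprime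
  · exact Or.inr (by rw [htop, Ideal.map_top])

theorem algebraMap_of_isLocalization [Algebra S T] (M : Submonoid S) [IsLocalization M T] :
    PrimeExtensionProperty (algebraMap S T) := by
  intro P hP
  by_cases hdisj : Disjoint (M : Set S) P
  · exact Or.inl (IsLocalization.isPrime_of_isPrime_disjoint M T P hP hdisj)
  · refine Or.inr (by_contra fun hne ↦ hdisj ?_)
    exact (IsLocalization.map_algebraMap_ne_top_iff_disjoint M T P).mp hne

theorem of_comp_algebraMap_of_isLocalization [Algebra R S] (M : Submonoid R)
    [IsLocalization M S] {g : S →+* T} (hg : PrimeExtensionProperty (g.comp (algebraMap R S))) :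
    PrimeExtensionProperty g := by
  intro Q hQ
  have hunder : (Q.under R).IsPrime := ((IsLocalization.isPrime_iff_isPrime_disjoint M S Q).1 hQ).1
  rw [← IsLocalization.map_under M S Q, Ideal.map_map]
  exact hg _ hunder

end PrimeExtensionProperty

theorem pep_localization {R S : Type*} [CommRing R] [CommRing S] (f : R →+* S)
    (hf : PrimeExtensionProperty f) (W : Submonoid R) :
    PrimeExtensionProperty
      (IsLocalization.map (Localization (W.map f)) f (Submonoid.le_comap_map W) :
        Localization W →+* Localization (W.map f)) := by
  refine PrimeExtensionProperty.of_comp_algebraMap_of_isLocalization W ?_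
  rw [IsLocalization.map_comp]
  exact hf.comp (PrimeExtensionProperty.algebraMap_of_isLocalization (W.map f))
end

section
/- Let R → S be a ring homomorphism and let 𝔄 be an ideal of R consisting of nilpotent elements. Then R → S has the prime extension property if and only if R/𝔄 → S/𝔄S has the prime extension property. -/
namespace Ideal

section Surjective

variable {R S : Type*} [CommRing R] [CommRing S] {π : R →+* S}

theorem comap_map_of_surjective_of_ker_le (hπ : Function.Surjective π) {I : Ideal R}
    (hI : RingHom.ker π ≤ I) :
    (I.map π).comap π = I := by
  rw [comap_map_of_surjective _ hπ, ← RingHom.ker_eq_comap_bot, sup_eq_left.2 hI]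

theorem map_isPrime_or_eq_top_iff_of_surjective (hπ : Function.Surjective π) {I : Ideal R}
    (hI : RingHom.ker π ≤ I) :
    (I.map π).IsPrime ∨ I.map π = ⊤ ↔ I.IsPrime ∨ I = ⊤ := by
  constructor
  · rintro (hprime | htop)
    · exact .inl (comap_map_of_surjective_of_ker_le hπ hI ▸ hprime.comap π)
    · exact .inr (by rw [← comap_map_of_surjective_of_ker_le hπ hI, htop, comap_top])
  · rintro (hprime | rfl)
    · exact .inl (map_isPrime_of_surjective hπ hI)
    · exact .inr (map_top π)

theorem forall_isPrime_iff_of_surjective (hπ : Function.Surjective π) {p : Ideal S → Prop} :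
    (∀ Q : Ideal S, Q.IsPrime → p Q) ↔
      ∀ P : Ideal R, P.IsPrime → RingHom.ker π ≤ P → p (P.map π) := by
  refine ⟨fun h P hP hker => h _ (map_isPrime_of_surjective hπ hker), fun h Q hQ => ?_⟩
  rw [← map_comap_of_surjective π hπ Q]
  exact h _ (hQ.comap π) (ker_le_comap π)

end Surjective

end Ideal

open Ideal in
theorem primeExtensionProperty_quotientMap_iff {R S : Type*} [CommRing R] [CommRing S]
    (f : R →+* S) (𝔄 : Ideal R) :
    PrimeExtensionProperty (quotientMap (𝔄.map f) f le_comap_map : R ⧸ 𝔄 →+* S ⧸ 𝔄.map f) ↔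
      ∀ P : Ideal R, P.IsPrime → 𝔄 ≤ P → (P.map f).IsPrime ∨ P.map f = ⊤ := by
  rw [PrimeExtensionProperty, forall_isPrime_iff_of_surjective Ideal.Quotient.mk_surjective, mk_ker]
  refine forall₂_congr fun P _ => forall_congr' fun h𝔄P => ?_
  have hker : RingHom.ker (Ideal.Quotient.mk (𝔄.map f)) ≤ P.map f := by
    rw [mk_ker]
    exact map_mono h𝔄P
  rw [map_map, quotientMap_comp_mk, ← map_map,
    map_isPrime_or_eq_top_iff_of_surjective Ideal.Quotient.mk_surjective hker]

theorem pep_iff_pep_quotient_nilpotents {R S : Type*} [CommRing R] [CommRing S]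
    (f : R →+* S) (𝔄 : Ideal R) (h𝔄 : 𝔄 ≤ nilradical R) :
    PrimeExtensionProperty f ↔
      PrimeExtensionProperty (Ideal.quotientMap (𝔄.map f) f Ideal.le_comap_map :
        R ⧸ 𝔄 →+* S ⧸ 𝔄.map f) := by
  rw [primeExtensionProperty_quotientMap_iff]
  exact forall₂_congr fun P _ => ⟨fun h _ => h, fun h => h (h𝔄.trans (nilradical_le_prime P))⟩
end

section
/- If R is a Noetherian commutative ring and P is a prime ideal of R, then the extension of P to the formal power series ring R⟦X⟧ is a prime ideal. -/
/-!
If `P = (g₁, …, gₖ)`, a power series whose coefficients all lie in `P` can be written, one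
coefficient at a time, as `∑ C gᵢ * hᵢ` for suitable power series `hᵢ`; so the extension of `P`
to `R⟦X⟧` is the kernel of the coefficientwise reduction `R⟦X⟧ → (R ⧸ P)⟦X⟧`. The target is a
domain when `P` is prime, hence so is this kernel.
-/

namespace PowerSeries

variable {R : Type*} [CommRing R]

theorem mem_map_C_of_forall_coeff_mem {I : Ideal R} (hI : I.FG) {f : PowerSeries R}
    (hf : ∀ n, coeff n f ∈ I) : f ∈ I.map C := by
  obtain ⟨s, rfl⟩ := hI
  have hcoeff : ∀ n, ∃ c : R → R, ∑ g ∈ s, c g • g = coeff n f := fun n ↦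
    (Submodule.mem_span_finset.1 (hf n)).imp fun _ ↦ And.right
  choose c hc using hcoeff
  have hsum : f = ∑ g ∈ s, C g * mk fun n ↦ c n g := by
    ext n
    simp only [map_sum, coeff_C_mul, coeff_mk, ← hc n, smul_eq_mul, mul_comm]
  rw [hsum]
  exact Ideal.sum_mem _ fun g hg ↦
    Ideal.mul_mem_right _ _ (Ideal.mem_map_of_mem _ (Submodule.subset_span hg))

theorem ker_map_mk_eq_map_C {I : Ideal R} (hI : I.FG) :
    RingHom.ker (map (Ideal.Quotient.mk I)) = I.map C := by
  refine le_antisymm (fun f hf ↦ mem_map_C_of_forall_coeff_mem hI fun n ↦ ?_) ?_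
  · rw [← Ideal.Quotient.eq_zero_iff_mem, ← coeff_map, RingHom.mem_ker.1 hf, map_zero]
  · rw [Ideal.map_le_iff_le_comap]
    intro r hr
    simp [map_C, Ideal.Quotient.eq_zero_iff_mem.2 hr]

theorem isPrime_map_C_of_isPrime_of_fg {P : Ideal R} [P.IsPrime] (hP : P.FG) :
    (P.map (C : R →+* PowerSeries R)).IsPrime :=
  ker_map_mk_eq_map_C hP ▸ RingHom.ker_isPrime _

end PowerSeries

theorem map_powerSeries_C_isPrime {R : Type*} [CommRing R] [IsNoetherianRing R]
    (P : Ideal R) (hP : P.IsPrime) :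
    (P.map (PowerSeries.C : R →+* PowerSeries R)).IsPrime :=
  PowerSeries.isPrime_map_C_of_isPrime_of_fg (IsNoetherian.noetherian P)
end

section
/- Let R → S be a ring homomorphism such that S/𝔄ᵢS is flat over R/𝔄ᵢ for ideals 𝔄₁,…,𝔄_{h-1} of R, and let 𝔄_h be any further ideal. Then the intersection of the extensions ⋂ᵢ (𝔄ᵢ S) equals the extension of the intersection (⋂ᵢ 𝔄ᵢ)S. -/
/-!
If `S/AS` is flat over `R/A`, then `AS ∩ BS = (A ∩ B)S` for every ideal `B`. Write
`x ∈ AS ∩ BS` as `∑ f(bᵢ) sᵢ` with `bᵢ ∈ B`. Its vanishing in `S/AS` is a linear relation over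
`R/A`, which flatness makes trivial (equational criterion): `s̄ᵢ = ∑ⱼ āᵢⱼ ȳⱼ` with
`∑ᵢ b̄ᵢ āᵢⱼ = 0`. Lifting to `R` and `S`, the elements `cⱼ = ∑ᵢ bᵢ aᵢⱼ` lie in `A ∩ B`, and
`x = ∑ⱼ f(cⱼ) yⱼ + ∑ᵢ f(bᵢ) (sᵢ - ∑ⱼ f(aᵢⱼ) yⱼ) ∈ (A ∩ B)S + B·AS = (A ∩ B)S`.
The theorem follows by splitting off `𝔄₀, 𝔄₁, …` one at a time; the last ideal is never split
off, so it needs no flatness.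
-/

theorem Ideal.exists_sum_eq_of_mem_map {R S : Type*} [CommRing R] [CommRing S] {f : R →+* S}
    {I : Ideal R} {x : S} (hx : x ∈ I.map f) :
    ∃ (n : ℕ) (b : Fin n → R) (s : Fin n → S), (∀ i, b i ∈ I) ∧ x = ∑ i, f (b i) * s i := by
  obtain ⟨n, s, g, rfl⟩ := Submodule.mem_span_set'.mp hx
  choose b hb hfb using fun i ↦ (g i).2
  exact ⟨n, b, s, hb, by simp [hfb, mul_comm]⟩

theorem Ideal.map_inf_eq_of_flat_quotient {R S : Type*} [CommRing R] [CommRing S] (f : R →+* S)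
    (A B : Ideal R)
    (hA : letI := (quotientMap (A.map f) f le_comap_map).toAlgebra
      Module.Flat (R ⧸ A) (S ⧸ A.map f)) :
    A.map f ⊓ B.map f = (A ⊓ B).map f := by
  let _ := (quotientMap (A.map f) f le_comap_map).toAlgebra
  refine le_antisymm ?_ (le_inf (map_mono inf_le_left) (map_mono inf_le_right))
  rintro x ⟨hxA, hxB⟩
  obtain ⟨n, b, s, hb, rfl⟩ := exists_sum_eq_of_mem_map hxB
  have hrel : ∑ i, Quotient.mk A (b i) • Quotient.mk (A.map f) (s i) = 0 := by
    simpa [Algebra.smul_def, RingHom.algebraMap_toAlgebra] using Quotient.eq_zero_iff_mem.mpr hxA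
  obtain ⟨k, a, y, hs, ha⟩ : Module.IsTrivialRelation (fun i ↦ Quotient.mk A (b i))
      (fun i ↦ Quotient.mk (A.map f) (s i)) :=
    Module.Flat.isTrivialRelation_of_sum_smul_eq_zero hrel
  choose a' ha' using fun i j ↦ Quotient.mk_surjective (a i j)
  choose y' hy' using fun j ↦ Quotient.mk_surjective (y j)
  obtain rfl : a = fun i j ↦ Quotient.mk A (a' i j) := funext₂ fun i j ↦ (ha' i j).symm
  obtain rfl : y = fun j ↦ Quotient.mk _ (y' j) := funext fun j ↦ (hy' j).symm
  have hc : ∀ j, ∑ i, b i * a' i j ∈ A ⊓ B := fun j ↦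
    ⟨Quotient.eq_zero_iff_mem.mp (by simpa using ha j),
      Submodule.sum_mem _ fun i _ ↦ mul_mem_right _ _ (hb i)⟩
  have hd : ∀ i, s i - ∑ j, f (a' i j) * y' j ∈ A.map f := fun i ↦
    Quotient.eq.mp (by simpa [Algebra.smul_def, RingHom.algebraMap_toAlgebra] using hs i)
  have hsplit : ∑ i, f (b i) * s i =
      ∑ i, f (b i) * (s i - ∑ j, f (a' i j) * y' j) + ∑ j, f (∑ i, b i * a' i j) * y' j := by
    simp only [mul_sub, Finset.sum_sub_distrib, map_sum, map_mul, Finset.mul_sum, Finset.sum_mul,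
      mul_assoc]
    rw [Finset.sum_comm (γ := Fin k)]
    abel
  rw [hsplit]
  refine add_mem (Submodule.sum_mem _ fun i _ ↦ ?_)
    (Submodule.sum_mem _ fun j _ ↦ mul_mem_right _ _ (mem_map_of_mem _ (hc j)))
  have hAB : A.map f * B.map f ≤ (A ⊓ B).map f :=
    (Ideal.map_mul f A B).ge.trans (map_mono mul_le_inf)
  rw [mul_comm]
  exact hAB (mul_mem_mul (hd i) (mem_map_of_mem f (hb i)))

theorem Fin.iInf_succ {α : Type*} [CompleteLattice α] {n : ℕ} (g : Fin (n + 1) → α) :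
    ⨅ i, g i = g 0 ⊓ ⨅ i : Fin n, g i.succ :=
  le_antisymm (le_inf (iInf_le _ 0) (le_iInf fun i ↦ iInf_le _ i.succ))
    (le_iInf <| Fin.cases inf_le_left fun i ↦ inf_le_right.trans (iInf_le _ i))

theorem iInf_map_of_flat_quotients {R S : Type*} [CommRing R] [CommRing S]
    (f : R →+* S) (h : ℕ) (𝔄 : Fin h → Ideal R)
    (hflat : ∀ i : Fin h, (i : ℕ) + 1 < h →
      letI : Algebra (R ⧸ 𝔄 i) (S ⧸ (𝔄 i).map f) :=
        (Ideal.quotientMap ((𝔄 i).map f) f Ideal.le_comap_map).toAlgebra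
      Module.Flat (R ⧸ 𝔄 i) (S ⧸ (𝔄 i).map f)) :
    (⨅ i, (𝔄 i).map f) = (⨅ i, 𝔄 i).map f := by
  induction h with
  | zero => simp only [iInf_of_empty, Ideal.map_top]
  | succ n ih =>
    rcases n with _ | n
    · simp
    rw [Fin.iInf_succ, Fin.iInf_succ 𝔄, ih _ fun i hi ↦ hflat i.succ (by simpa using hi)]
    exact Ideal.map_inf_eq_of_flat_quotient f _ _ (hflat 0 (by simp))
end

section
/- Let A be an ℕ-graded commutative ring whose degree-zero piece A₀ is a local ring with maximal ideal 𝔪₀, and let 𝔄 = 𝔪₀ + A_{>0} be the unique maximal homogeneous ideal (where A_{>0} is the ideal generated by elements of positive degree). Then every element of A not in 𝔄 is a nonzerodivisor on A and on every ℤ-graded A-module. -/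
/-!
Let `m ≠ 0` and let `m_{j₀}` be its lowest nonzero homogeneous component. Since `A` is
nonnegatively graded, the degree-`j₀` component of `a • m` is `a₀ • m_{j₀}`, and `a₀` is a unit
of `A₀` because it lies outside `𝔪₀`; hence `a • m ≠ 0`. The ring `A` is the case `M = A`.
-/

open DirectSum

section

variable {ι A M : Type*} [Semiring ι] [LinearOrder ι] [IsStrictOrderedRing ι]
  [Ring A] (𝒜 : ℕ → AddSubgroup A) [GradedRing 𝒜]
  [AddCommGroup M] [Module A M] (ℳ : ι → AddSubgroup M) [Decomposition ℳ]

theorem coe_decompose_smul_of_forall_lt_eq_zero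
    (hsmul : ∀ (i : ℕ) (j : ι), ∀ x ∈ 𝒜 i, ∀ m ∈ ℳ j, x • m ∈ ℳ ((i : ι) + j))
    (a : A) {m : M} {j₀ : ι} (hm : ∀ j < j₀, decompose ℳ m j = 0) :
    (decompose ℳ (a • m) j₀ : M) = (decompose 𝒜 a 0 : A) • (decompose ℳ m j₀ : M) := by
  classical
  have hdeg {i : ℕ} {j : ι} (hj : j₀ ≤ j) (h : (i : ι) + j = j₀) : i = 0 ∧ j = j₀ := by
    have hi : i = 0 := Nat.cast_nonpos.mp (add_le_iff_nonpos_left.mp (h.le.trans hj))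
    exact ⟨hi, by simpa [hi] using h⟩
  have hsmul_ne {i : ℕ} {j : ι} (h : (i : ι) + j ≠ j₀) :
      (decompose ℳ ((decompose 𝒜 a i : A) • (decompose ℳ m j : M)) j₀ : M) = 0 :=
    decompose_of_mem_ne ℳ (hsmul i j _ (SetLike.coe_mem _) _ (SetLike.coe_mem _)) h
  conv_lhs => rw [← sum_support_decompose 𝒜 a, ← sum_support_decompose ℳ m]
  simp only [Finset.sum_smul, Finset.smul_sum, decompose_sum, DirectSum.sum_apply,
    AddSubmonoidClass.coe_finsetSum]
  rw [Finset.sum_eq_single j₀, Finset.sum_eq_single 0]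
  · have hmem := hsmul 0 j₀ _ (SetLike.coe_mem (decompose 𝒜 a 0)) _
      (SetLike.coe_mem (decompose ℳ m j₀))
    rw [Nat.cast_zero, zero_add] at hmem
    exact decompose_of_mem_same ℳ hmem
  · exact fun i _ hi => hsmul_ne fun h => hi (hdeg le_rfl h).1
  · intro h
    simp [DFinsupp.notMem_support_iff.mp h]
  · intro j hj hj₀
    have hle : j₀ ≤ j := not_lt.mp fun hlt => DFinsupp.mem_support_iff.mp hj (hm j hlt)
    exact Finset.sum_eq_zero fun i _ => hsmul_ne fun h => hj₀ (hdeg hle h).2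
  · intro h
    simp [DFinsupp.notMem_support_iff.mp h]

theorem eq_zero_of_smul_eq_zero_of_isUnit_decompose_zero
    (hsmul : ∀ (i : ℕ) (j : ι), ∀ x ∈ 𝒜 i, ∀ m ∈ ℳ j, x • m ∈ ℳ ((i : ι) + j))
    {a : A} (ha : IsUnit (decompose 𝒜 a 0)) {m : M} (h : a • m = 0) : m = 0 := by
  classical
  by_contra hm
  have hsupp : (decompose ℳ m).support.Nonempty := by
    rw [Finset.nonempty_iff_ne_empty, Ne, DFinsupp.support_eq_empty, ← decompose_zero (ℳ := ℳ)]
    exact fun h => hm ((decompose ℳ).injective h)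
  set j₀ := (decompose ℳ m).support.min' hsupp
  have hlow := coe_decompose_smul_of_forall_lt_eq_zero 𝒜 ℳ hsmul a (j₀ := j₀)
    (fun j hj => by simpa using mt ((decompose ℳ m).support.min'_le j) hj.not_ge)
  have hunit : IsUnit (decompose 𝒜 a 0 : A) := ha.map (SetLike.GradeZero.subring 𝒜).subtype
  have hlow_zero : decompose ℳ m j₀ = 0 := by
    rw [h, decompose_zero, DirectSum.zero_apply, ZeroMemClass.coe_zero, eq_comm,
      hunit.smul_eq_zero] at hlow
    exact Subtype.ext hlow
  exact DFinsupp.mem_support_iff.mp ((decompose ℳ m).support.min'_mem hsupp)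
    hlow_zero

end

/-- Every element of an `ℕ`-graded ring `A` with `A₀` (quasi)local that lies outside the
maximal homogeneous ideal `𝔪₀ + A_{>0}` (equivalently, whose degree-zero component is not
in `𝔪₀`) is a nonzerodivisor on `A` and on every `ℤ`-graded `A`-module. -/
theorem nonzerodivisor_of_not_mem_max_homogeneous_ideal
    {A : Type*} [CommRing A] (𝒜 : ℕ → AddSubgroup A) [GradedRing 𝒜]
    [IsLocalRing (𝒜 0)]
    (a : A)
    (ha : (DirectSum.decompose 𝒜 a 0 : 𝒜 0) ∉ IsLocalRing.maximalIdeal (𝒜 0))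
    (M : Type*) [AddCommGroup M] [Module A M]
    (ℳ : ℤ → AddSubgroup M) [DirectSum.Decomposition ℳ]
    (hsmul : ∀ (i : ℕ) (j : ℤ), ∀ x ∈ 𝒜 i, ∀ m ∈ ℳ j, x • m ∈ ℳ ((i : ℤ) + j)) :
    (∀ b : A, a * b = 0 → b = 0) ∧ (∀ m : M, a • m = 0 → m = 0) := by
  have hunit : IsUnit (decompose 𝒜 a 0) := IsLocalRing.notMem_maximalIdeal.mp ha
  have hmul : ∀ (i j : ℕ), ∀ x ∈ 𝒜 i, ∀ y ∈ 𝒜 j, x • y ∈ 𝒜 ((i : ℕ) + j) :=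
    fun _ _ _ hx _ hy => SetLike.mul_mem_graded hx hy
  exact ⟨fun _ => eq_zero_of_smul_eq_zero_of_isUnit_decompose_zero 𝒜 𝒜 hmul hunit,
    fun _ => eq_zero_of_smul_eq_zero_of_isUnit_decompose_zero 𝒜 ℳ hsmul hunit⟩
end

section
/- Let (R,𝔪) → (S,𝔫) be a local homomorphism of local (quasilocal) rings that has the stable prime extension property. Then the kernel of R → S is contained in the nilradical of R. In particular, if R is reduced, then R → S is injective. -/
/-- A ring homomorphism has the stable prime extension property if for every `n`, the induced
map on polynomial rings in `n` variables has the prime extension property. -/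
def StablePrimeExtensionProperty {R S : Type*} [CommRing R] [CommRing S] (f : R →+* S) : Prop :=
  ∀ n : ℕ, PrimeExtensionProperty (MvPolynomial.map (σ := Fin n) f)

/-!
If `a ∈ ker f` is not nilpotent, choose a prime `p ∌ a` and let `b ≠ 0` be the image of `a` in
`D = R ⧸ p`. The kernel `Q` of `R[X, Y] → D[T, T⁻¹]`, `X ↦ T`, `Y ↦ b T⁻¹` is prime and contains
`XY - a`, so its extension to `S[X, Y]` contains `XY`. It contains neither `X` nor `Y`:
reducing modulo the maximal ideal of `S` (which kills `a`) sends the extension to zero but `X`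
to `T`, and `Q` is symmetric in `X` and `Y` because over the fraction field of `D` the
substitution `T ↦ b T⁻¹` exchanges `T` and `b T⁻¹`. So the extension is neither prime nor the
unit ideal.
-/

open MvPolynomial
open LaurentPolynomial (T)
open scoped LaurentPolynomial

noncomputable def hyperbolaEval {R D : Type*} [CommRing R] [CommRing D] (g : R →+* D) (b : D) :
    MvPolynomial (Fin 2) R →+* D[T;T⁻¹] :=
  eval₂Hom (LaurentPolynomial.C.comp g) ![T 1, LaurentPolynomial.C b * T (-1)]

section HyperbolaEval

variable {R S D E : Type*} [CommRing R] [CommRing S] [CommRing D] [CommRing E]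

@[simp]
lemma hyperbolaEval_C (g : R →+* D) (b : D) (r : R) :
    hyperbolaEval g b (C r) = LaurentPolynomial.C (g r) :=
  eval₂Hom_C _ _ _

@[simp]
lemma hyperbolaEval_X_zero (g : R →+* D) (b : D) : hyperbolaEval g b (X 0) = T 1 :=
  eval₂Hom_X' _ _ _

@[simp]
lemma hyperbolaEval_X_one (g : R →+* D) (b : D) :
    hyperbolaEval g b (X 1) = LaurentPolynomial.C b * T (-1) :=
  eval₂Hom_X' _ _ _

lemma X_mul_X_sub_C_mem_ker_hyperbolaEval (g : R →+* D) (a : R) :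
    X 0 * X 1 - C a ∈ RingHom.ker (hyperbolaEval g (g a)) := by
  rw [RingHom.mem_ker, map_sub, map_mul, hyperbolaEval_X_zero, hyperbolaEval_X_one,
    hyperbolaEval_C, mul_left_comm, ← LaurentPolynomial.T_add]
  simp

lemma hyperbolaEval_comp_map (f : R →+* S) (g : S →+* D) (b : D) :
    (hyperbolaEval g b).comp (MvPolynomial.map f) = hyperbolaEval (g.comp f) b := by
  refine MvPolynomial.ringHom_ext (fun r => ?_) (fun i => ?_)
  · simp
  · fin_cases i <;> simp

lemma mapRingHom_comp_hyperbolaEval (ρ : D →+* E) (g : R →+* D) (b : D) :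
    (AddMonoidAlgebra.mapRingHom ℤ ρ).comp (hyperbolaEval g b) =
      hyperbolaEval (ρ.comp g) (ρ b) := by
  have map_C (d : D) : AddMonoidAlgebra.mapRingHom ℤ ρ (LaurentPolynomial.C d) =
      LaurentPolynomial.C (ρ d) :=
    AddMonoidAlgebra.mapRingHom_single ρ 0 d
  have map_T (n : ℤ) : AddMonoidAlgebra.mapRingHom ℤ ρ (T n) = T n :=
    (AddMonoidAlgebra.mapRingHom_single ρ n 1).trans (by rw [map_one]; rfl)
  refine MvPolynomial.ringHom_ext (fun r => ?_) (fun i => ?_)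
  · simp [map_C]
  · fin_cases i <;> simp [map_C, map_T]

end HyperbolaEval

section Swap

variable {R D K : Type*} [CommRing R] [CommRing D] [IsDomain D] [Field K]

lemma rename_swap_mem_ker_hyperbolaEval_of_field (g : R →+* K) {c : K} (hc : c ≠ 0)
    {P : MvPolynomial (Fin 2) R} (hP : P ∈ RingHom.ker (hyperbolaEval g c)) :
    rename (Equiv.swap 0 1) P ∈ RingHom.ker (hyperbolaEval g c) := by
  have hu : IsUnit (LaurentPolynomial.C c * T (-1) : K[T;T⁻¹]) :=
    (hc.isUnit.map LaurentPolynomial.C).mul (LaurentPolynomial.isUnit_T _)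
  set σ : K[T;T⁻¹] →+* K[T;T⁻¹] := LaurentPolynomial.eval₂ LaurentPolynomial.C hu.unit
  have hσ : σ.comp (hyperbolaEval g c) =
      (hyperbolaEval g c).comp (rename (Equiv.swap 0 1)).toRingHom := by
    refine MvPolynomial.ringHom_ext (fun r => ?_) (fun i => ?_)
    · simp [σ]
    · fin_cases i
      · simp [σ]
      · have : LaurentPolynomial.C c * ((hu.unit⁻¹ : K[T;T⁻¹]ˣ) : K[T;T⁻¹]) = T 1 := by
          rw [Units.mul_inv_eq_iff_eq_mul, IsUnit.unit_spec, mul_left_comm,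
            ← LaurentPolynomial.T_add]
          simp
        simpa [σ] using this
  rw [RingHom.mem_ker] at hP ⊢
  simpa [hP] using (RingHom.congr_fun hσ P).symm

lemma rename_swap_mem_ker_hyperbolaEval (g : R →+* D) {b : D} (hb : b ≠ 0)
    {P : MvPolynomial (Fin 2) R} (hP : P ∈ RingHom.ker (hyperbolaEval g b)) :
    rename (Equiv.swap 0 1) P ∈ RingHom.ker (hyperbolaEval g b) := by
  let ι := algebraMap D (FractionRing D)
  have hι := IsFractionRing.injective D (FractionRing D)
  have hker : RingHom.ker (hyperbolaEval g b) = RingHom.ker (hyperbolaEval (ι.comp g) (ι b)) := by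
    rw [← mapRingHom_comp_hyperbolaEval, RingHom.ker_comp_of_injective]
    exact AddMonoidAlgebra.map_injective _ hι
  rw [hker] at hP ⊢
  exact rename_swap_mem_ker_hyperbolaEval_of_field _ ((map_ne_zero_iff ι hι).2 hb) hP

end Swap

section PrimeExtension

variable {R S : Type*} [CommRing R] [CommRing S]

lemma rename_mem_map_of_forall_rename_mem {σ : Type*} (f : R →+* S) (e : σ → σ)
    {Q : Ideal (MvPolynomial σ R)} (hQ : ∀ P ∈ Q, rename e P ∈ Q)
    {P : MvPolynomial σ S} (hP : P ∈ Q.map (MvPolynomial.map f)) :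
    rename e P ∈ Q.map (MvPolynomial.map f) := by
  have hle : Q.map (MvPolynomial.map f) ≤ (Q.map (MvPolynomial.map f)).comap (rename e) :=
    Ideal.map_le_iff_le_comap.2 fun P hP => by
      show rename e (MvPolynomial.map f P) ∈ Q.map (MvPolynomial.map f)
      rw [← map_rename]
      exact Ideal.mem_map_of_mem _ (hQ P hP)
  exact hle hP

lemma X_zero_notMem_map_ker_hyperbolaEval (f : R →+* S) {a : R} (ha : f a = 0) {p : Ideal R}
    {N : Ideal S} (hN : N ≠ ⊤) (hpN : p ≤ N.comap f) :
    X 0 ∉ (RingHom.ker (hyperbolaEval (Ideal.Quotient.mk p) (Ideal.Quotient.mk p a))).map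
      (MvPolynomial.map f) := by
  have : Nontrivial (S ⧸ N) := Ideal.Quotient.nontrivial_iff.2 hN
  set θ := hyperbolaEval (Ideal.Quotient.mk N) 0
  have hθ : θ.comp (MvPolynomial.map f) =
      (AddMonoidAlgebra.mapRingHom ℤ (Ideal.quotientMap N f hpN)).comp
        (hyperbolaEval (Ideal.Quotient.mk p) (Ideal.Quotient.mk p a)) := by
    rw [hyperbolaEval_comp_map, mapRingHom_comp_hyperbolaEval, Ideal.quotientMap_comp_mk,
      Ideal.quotientMap_mk, ha, map_zero]
  have hle : (RingHom.ker (hyperbolaEval (Ideal.Quotient.mk p) (Ideal.Quotient.mk p a))).map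
      (MvPolynomial.map f) ≤ RingHom.ker θ := by
    rw [Ideal.map_le_iff_le_comap, RingHom.comap_ker, hθ, ← RingHom.comap_ker]
    exact Ideal.ker_le_comap _
  intro hX
  have := hle hX
  rw [RingHom.mem_ker, hyperbolaEval_X_zero] at this
  exact (LaurentPolynomial.isUnit_T 1).ne_zero this

end PrimeExtension

theorem not_primeExtensionProperty_map_of_mem_ker {R S : Type*} [CommRing R] [CommRing S]
    (f : R →+* S) {a : R} (ha : f a = 0) {p : Ideal R} [p.IsPrime] (hap : a ∉ p)
    {N : Ideal S} (hN : N ≠ ⊤) (hpN : p ≤ N.comap f) :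
    ¬ PrimeExtensionProperty (MvPolynomial.map (σ := Fin 2) f) := by
  set Q := RingHom.ker (hyperbolaEval (Ideal.Quotient.mk p) (Ideal.Quotient.mk p a))
  have hX₀ : X 0 ∉ Q.map (MvPolynomial.map f) := X_zero_notMem_map_ker_hyperbolaEval f ha hN hpN
  have hb : Ideal.Quotient.mk p a ≠ 0 := by simpa [Ideal.Quotient.eq_zero_iff_mem]
  have hX₁ : X 1 ∉ Q.map (MvPolynomial.map f) := fun h => hX₀ <| by
    simpa using rename_mem_map_of_forall_rename_mem f (Equiv.swap 0 1)
      (fun _ => rename_swap_mem_ker_hyperbolaEval _ hb) h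
  have hX₀X₁ : X 0 * X 1 ∈ Q.map (MvPolynomial.map f) := by
    simpa [ha] using Ideal.mem_map_of_mem (MvPolynomial.map f)
      (X_mul_X_sub_C_mem_ker_hyperbolaEval (Ideal.Quotient.mk p) a)
  intro hpep
  rcases hpep Q (RingHom.ker_isPrime _) with hprime | htop
  · exact (hprime.mem_or_mem hX₀X₁).elim hX₀ hX₁
  · exact hX₀ (htop ▸ Submodule.mem_top)

theorem ker_le_nilradical_of_stable_pep {R S : Type*} [CommRing R] [CommRing S]
    [IsLocalRing R] [IsLocalRing S] (f : R →+* S) [IsLocalHom f]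
    (hf : StablePrimeExtensionProperty f) :
    (RingHom.ker f ≤ nilradical R) ∧ (IsReduced R → Function.Injective f) := by
  have hker : RingHom.ker f ≤ nilradical R := by
    intro a ha
    rw [nilradical_eq_sInf, Ideal.mem_sInf]
    intro p hp
    have : p.IsPrime := hp
    by_contra hap
    refine not_primeExtensionProperty_map_of_mem_ker f ha hap
      (IsLocalRing.maximalIdeal.isMaximal S).ne_top ?_ (hf 2)
    rw [IsLocalRing.maximalIdeal_comap]
    exact IsLocalRing.le_maximalIdeal hp.ne_top
  refine ⟨hker, fun _ => (RingHom.injective_iff_ker_eq_bot f).2 ?_⟩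
  exact le_bot_iff.1 (hker.trans (nilradical_eq_zero R).le)
end

section
/- Let R → S have the stable prime extension property. Then for every prime ideal P of R, either PS = S or the contraction of PS to R equals P. -/
/-! Suppose `a ∉ P` but `f a ∈ PS`. Let `K` be the fraction field of `R/P` and `Q ⊂ R[X,Y]`
the kernel of `X ↦ T`, `Y ↦ ā T⁻¹`, `R[X,Y] → K[T,T⁻¹]`: it is prime and contains `XY - a`
and `P`, so `XY ∈ QS`. Since `ā` is a unit, the automorphism `T ↦ ā T⁻¹` of `K[T,T⁻¹]` makes `Q`
stable under swapping `X` and `Y`. The map `R → S/PS` kills `a` and also `P`, the kernel of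
`R → K`; so comparing coefficients in `R[T,T⁻¹]` carries `QS` into the kernel of `X ↦ T`, `Y ↦ 0`,
`S[X,Y] → (S/PS)[T,T⁻¹]`. So `1 ∉ QS` and `X ∉ QS`, hence by symmetry `Y ∉ QS`: `QS` is neither
prime nor the unit ideal. -/

open LaurentPolynomial
open MvPolynomial (X rename)

theorem AddMonoidAlgebra.ker_mapRingHom_mono {M A B B' : Type*} [AddMonoid M] [Semiring A]
    [Semiring B] [Semiring B'] {c : A →+* B} {d : A →+* B'} (h : RingHom.ker c ≤ RingHom.ker d) :
    RingHom.ker (mapRingHom M c) ≤ RingHom.ker (mapRingHom M d) := by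
  intro x hx
  rw [RingHom.mem_ker] at hx ⊢
  ext m
  have hm : c (x.coeff m) = 0 := by simpa using congrArg (coeff · m) hx
  simpa using h hm

namespace LaurentPolynomial

variable {A B : Type*} [CommRing A] [CommRing B]

theorem mapRingHom_C (c : A →+* B) (r : A) :
    AddMonoidAlgebra.mapRingHom ℤ c (C r) = C (c r) := by
  rw [← single_eq_C, AddMonoidAlgebra.mapRingHom_single, single_eq_C]

theorem mapRingHom_T (c : A →+* B) (n : ℤ) : AddMonoidAlgebra.mapRingHom ℤ c (T n) = T n := by
  rw [T, AddMonoidAlgebra.mapRingHom_single, map_one, T]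

noncomputable def unitCMulT (u : Aˣ) (n : ℤ) : (A[T;T⁻¹])ˣ where
  val := C (u : A) * T n
  inv := C ((u⁻¹ : Aˣ) : A) * T (-n)
  val_inv := by rw [mul_mul_mul_comm, ← map_mul, u.mul_inv, map_one, one_mul, ← T_add]; simp
  inv_val := by rw [mul_mul_mul_comm, ← map_mul, u.inv_mul, map_one, one_mul, ← T_add]; simp

end LaurentPolynomial

section Hyperbola

variable {A B : Type*} [CommRing A] [CommRing B]

noncomputable def hyperbolaParam (b : A) : MvPolynomial (Fin 2) A →+* A[T;T⁻¹] :=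
  MvPolynomial.eval₂Hom C ![T 1, C b * T (-1)]

@[simp] theorem hyperbolaParam_C (b r : A) : hyperbolaParam b (MvPolynomial.C r) = C r := by
  simp [hyperbolaParam]

@[simp] theorem hyperbolaParam_X_zero (b : A) : hyperbolaParam b (X 0) = T 1 := by
  simp [hyperbolaParam]

@[simp] theorem hyperbolaParam_X_one (b : A) : hyperbolaParam b (X 1) = C b * T (-1) := by
  simp [hyperbolaParam]

theorem mapRingHom_comp_hyperbolaParam (c : A →+* B) (b : A) :
    (AddMonoidAlgebra.mapRingHom ℤ c).comp (hyperbolaParam b) =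
      (hyperbolaParam (c b)).comp (MvPolynomial.map c) := by
  apply MvPolynomial.ringHom_ext
  · intro r
    simp [mapRingHom_C]
  · intro i
    fin_cases i <;> simp [mapRingHom_C, mapRingHom_T]

theorem hyperbolaParam_comp_rename_swap (u : Aˣ) :
    (hyperbolaParam (u : A)).comp (rename (Equiv.swap 0 1)).toRingHom =
      (eval₂ C (unitCMulT u (-1))).comp (hyperbolaParam (u : A)) := by
  apply MvPolynomial.ringHom_ext
  · intro r
    simp
  · intro i
    fin_cases i
    · simp [unitCMulT]
    · simp [unitCMulT, ← mul_assoc, ← map_mul]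

theorem rename_swap_mem_ker_hyperbolaParam (u : Aˣ) {g : MvPolynomial (Fin 2) A}
    (hg : g ∈ RingHom.ker (hyperbolaParam (u : A))) :
    rename (Equiv.swap 0 1) g ∈ RingHom.ker (hyperbolaParam (u : A)) := by
  rw [RingHom.mem_ker] at hg ⊢
  simpa [hg] using DFunLike.congr_fun (hyperbolaParam_comp_rename_swap u) g

end Hyperbola

section HyperbolaIdeal

variable {R S K L : Type*} [CommRing R] [CommRing S] [CommRing K] [CommRing L]

noncomputable def hyperbolaIdeal (π : R →+* K) (a : R) : Ideal (MvPolynomial (Fin 2) R) :=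
  RingHom.ker ((hyperbolaParam (π a)).comp (MvPolynomial.map π))

theorem hyperbolaIdeal_isPrime [IsDomain K] (π : R →+* K) (a : R) :
    (hyperbolaIdeal π a).IsPrime :=
  RingHom.ker_isPrime _

theorem hyperbolaIdeal_mono {π : R →+* K} {ρ : R →+* L} (h : RingHom.ker π ≤ RingHom.ker ρ)
    (a : R) : hyperbolaIdeal π a ≤ hyperbolaIdeal ρ a := by
  intro g hg
  simp only [hyperbolaIdeal, RingHom.mem_ker, ← mapRingHom_comp_hyperbolaParam] at hg ⊢
  exact AddMonoidAlgebra.ker_mapRingHom_mono h hg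

theorem rename_swap_mem_hyperbolaIdeal {π : R →+* K} {a : R} (ha : IsUnit (π a))
    {g : MvPolynomial (Fin 2) R} (hg : g ∈ hyperbolaIdeal π a) :
    rename (Equiv.swap 0 1) g ∈ hyperbolaIdeal π a := by
  simpa [hyperbolaIdeal, MvPolynomial.map_rename] using
    rename_swap_mem_ker_hyperbolaParam ha.unit hg

theorem map_hyperbolaIdeal_le_comap_rename_swap (f : R →+* S) {π : R →+* K} {a : R}
    (ha : IsUnit (π a)) :
    (hyperbolaIdeal π a).map (MvPolynomial.map f) ≤
      ((hyperbolaIdeal π a).map (MvPolynomial.map f)).comap (rename (Equiv.swap 0 1)) := by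
  rw [Ideal.map_le_iff_le_comap]
  intro g hg
  rw [Ideal.mem_comap, Ideal.mem_comap, ← MvPolynomial.map_rename]
  exact Ideal.mem_map_of_mem _ (rename_swap_mem_hyperbolaIdeal ha hg)

theorem X_mul_X_mem_map_hyperbolaIdeal (f : R →+* S) (π : R →+* K) {a : R}
    (ha : f a ∈ (RingHom.ker π).map f) :
    X 0 * X 1 ∈ (hyperbolaIdeal π a).map (MvPolynomial.map f) := by
  have hC : (RingHom.ker π).map f ≤
      ((hyperbolaIdeal π a).map (MvPolynomial.map f)).comap MvPolynomial.C := by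
    rw [Ideal.map_le_iff_le_comap]
    intro p hp
    rw [Ideal.mem_comap, Ideal.mem_comap, ← MvPolynomial.map_C]
    refine Ideal.mem_map_of_mem _ ?_
    simp [hyperbolaIdeal, RingHom.mem_ker.mp hp]
  have hXY : X 0 * X 1 - MvPolynomial.C a ∈ hyperbolaIdeal π a := by
    simp [hyperbolaIdeal]
  simpa using Ideal.add_mem _ (Ideal.mem_map_of_mem (MvPolynomial.map f) hXY) (hC ha)

theorem map_hyperbolaIdeal_le_ker (f : R →+* S) {π : R →+* K} {I : Ideal S}
    (hπ : RingHom.ker π ≤ I.comap f) {a : R} (ha : f a ∈ I) :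
    (hyperbolaIdeal π a).map (MvPolynomial.map f) ≤
      RingHom.ker ((hyperbolaParam (0 : S ⧸ I)).comp (MvPolynomial.map (Ideal.Quotient.mk I))) := by
  have hρ : RingHom.ker π ≤ RingHom.ker ((Ideal.Quotient.mk I).comp f) := by
    rwa [← RingHom.comap_ker, Ideal.mk_ker]
  rw [Ideal.map_le_iff_le_comap]
  intro g hg
  simpa [hyperbolaIdeal, MvPolynomial.map_map, Ideal.Quotient.eq_zero_iff_mem.mpr ha] using
    hyperbolaIdeal_mono hρ a hg

end HyperbolaIdeal

theorem comap_map_eq_of_stable_pep {R S : Type*} [CommRing R] [CommRing S]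
    (f : R →+* S) (hf : StablePrimeExtensionProperty f)
    (P : Ideal R) (hP : P.IsPrime) :
    P.map f = ⊤ ∨ (P.map f).comap f = P := by
  refine or_iff_not_imp_left.mpr fun htop => le_antisymm (fun a ha => ?_) Ideal.le_comap_map
  by_contra haP
  have : Nontrivial (S ⧸ P.map f) := Ideal.Quotient.nontrivial_iff.mpr htop
  let π : R →+* FractionRing (R ⧸ P) := (algebraMap _ _).comp (Ideal.Quotient.mk P)
  have hπ : RingHom.ker π = P := by
    rw [RingHom.ker_comp_of_injective _ (IsFractionRing.injective _ _), Ideal.mk_ker]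
  have hπa : IsUnit (π a) := Ne.isUnit fun h => haP (hπ ▸ RingHom.mem_ker.mpr h)
  set Q := (hyperbolaIdeal π a).map (MvPolynomial.map f)
  have hQ_ker := map_hyperbolaIdeal_le_ker f (hπ.le.trans Ideal.le_comap_map) ha
  have hXY : X 0 * X 1 ∈ Q := X_mul_X_mem_map_hyperbolaIdeal f π (hπ.symm ▸ ha)
  have hX : X 0 ∉ Q := fun h => (isUnit_T 1).ne_zero (by simpa using hQ_ker h)
  rcases hf 2 _ (hyperbolaIdeal_isPrime π a) with hprime | hQ_top
  · rcases hprime.mem_or_mem hXY with h0 | h1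
    · exact hX h0
    · exact hX (by simpa using map_hyperbolaIdeal_le_comap_rename_swap f hπa h1)
  · simpa using hQ_ker ((Ideal.eq_top_iff_one _).mp hQ_top)
end

section
/- If a ring homomorphism R → S has the stable prime extension property, then for every prime ideal P of R and every field extension L of the residue field κ(P) = Frac(R/P), the ring L ⊗_R S is an integral domain or zero. Conversely, if R → S is flat and for every prime P of R the fiber κ(P) ⊗_R S is geometrically reduced and irreducible over κ(P), then R → S has the stable prime extension property. -/
open TensorProduct

/-- The residue field `κ(P) = R_P / P R_P` of a prime `P`. -/
abbrev ResidueFieldAt {R : Type u} [CommRing R] (P : Ideal R) [P.IsPrime] : Type u :=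
  IsLocalRing.ResidueField (Localization.AtPrime P)

/-!
For a prime `Q` of `R[X_σ]` the ring `S[X_σ] ⧸ Q S[X_σ]` is `(R[X_σ] ⧸ Q) ⊗[R] S`, so `Q` extends
to a prime or to the unit ideal exactly when this tensor product has no zero divisors. Every domain
`A` over `R`, in particular every field `L` over `κ(P)`, is such a quotient `R[X_A] ⧸ Q`; and since
a relation `p * q ∈ Q S[X_σ]` involves only finitely many variables, the stable prime extension
property gives the first part. Conversely, if `S` is flat over `R`, then `A ⊗[R] S` embeds into
`K ⊗[R] S` where `K = Frac A`, a field extension of `κ(P)` for `P = ker (R → A)`.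
-/

open MvPolynomial

theorem PrimeExtensionProperty.of_ringEquiv {A B A' B' : Type*} [CommRing A] [CommRing B]
    [CommRing A'] [CommRing B'] {g : A →+* B} {g' : A' →+* B'} (e₁ : A ≃+* A') (e₂ : B ≃+* B')
    (comm : (e₂ : B →+* B').comp g = g'.comp e₁) (h : PrimeExtensionProperty g) :
    PrimeExtensionProperty g' := by
  intro P hP
  have hmap : P.map g' = ((P.comap (e₁ : A →+* A')).map g).map (e₂ : B →+* B') := by
    rw [Ideal.map_map, comm, ← Ideal.map_map,
      Ideal.map_comap_of_surjective (e₁ : A →+* A') e₁.surjective]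
  rw [hmap]
  rcases h (P.comap (e₁ : A →+* A')) inferInstance with hprime | htop
  · exact Or.inl (Ideal.map_isPrime_of_equiv e₂)
  · exact Or.inr (by rw [htop, Ideal.map_top])

theorem Ideal.comap_map_of_leftInverse {A B F G : Type*} [CommRing A] [CommRing B]
    [FunLike F A B] [RingHomClass F A B] [FunLike G B A] [RingHomClass G B A] {f : F} (g : G)
    (hgf : Function.LeftInverse g f) (I : Ideal A) : (I.map f).comap f = I :=
  le_antisymm ((Ideal.comap_le_map_of_inverse f g _ hgf).trans
    (Ideal.map_le_iff_le_comap.2 (Ideal.map_le_comap_of_inverse f g I hgf))) Ideal.le_comap_map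

theorem MvPolynomial.exists_rename_eq_of_vars_subset {R σ : Type*} [CommSemiring R] {s : Set σ}
    {p : MvPolynomial σ R} (h : ↑p.vars ⊆ s) : ∃ p₁ : MvPolynomial s R, rename (↑) p₁ = p := by
  rwa [← mem_supported, supported_eq_range_rename] at h

section FiniteVariables
variable {R S : Type*} [CommRing R] [CommRing S] (f : R →+* S) {σ τ : Type*}

theorem MvPolynomial.map_comap_rename_le (Q : Ideal (MvPolynomial σ R)) (ι : τ → σ) :
    ((Q.comap (rename ι)).map (map f)).map (rename ι) ≤ Q.map (map f) := by
  have comm : (rename ι).toRingHom.comp (map f) = (map f).comp (rename ι).toRingHom :=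
    RingHom.ext fun x => (map_rename f ι x).symm
  change Ideal.map (rename ι).toRingHom _ ≤ _
  rw [Ideal.map_map, comm, ← Ideal.map_map]
  exact Ideal.map_mono Ideal.map_comap_le

theorem MvPolynomial.map_rename_mem_map_comap_rename {Q : Ideal (MvPolynomial σ R)} {ι : τ → σ}
    {g : MvPolynomial τ R} (hg : rename ι g ∈ Q) :
    map f (rename ι g) ∈ ((Q.comap (rename ι)).map (map f)).map (rename ι) := by
  rw [map_rename]
  exact Ideal.mem_map_of_mem _ (Ideal.mem_map_of_mem _ hg)

variable {f}

theorem PrimeExtensionProperty.mvPolynomial_congr (e : σ ≃ τ)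
    (h : PrimeExtensionProperty (map (σ := σ) f)) : PrimeExtensionProperty (map (σ := τ) f) :=
  h.of_ringEquiv (renameEquiv R e).toRingEquiv (renameEquiv S e).toRingEquiv (by ext <;> simp)

theorem StablePrimeExtensionProperty.primeExtensionProperty_of_finite
    (h : StablePrimeExtensionProperty f) [Finite τ] : PrimeExtensionProperty (map (σ := τ) f) :=
  let ⟨n, ⟨e⟩⟩ := Finite.exists_equiv_fin τ
  (h n).mvPolynomial_congr e.symm

theorem PrimeExtensionProperty.mvPolynomial_of_forall_finset
    (h : ∀ s : Finset σ, PrimeExtensionProperty (map (σ := (s : Set σ)) f)) :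
    PrimeExtensionProperty (map (σ := σ) f) := by
  classical
  intro Q hQ
  refine or_iff_not_imp_right.2 fun hne => ⟨hne, fun {p q} hpq => ?_⟩
  obtain ⟨_, hTQ, hpqT⟩ := Submodule.mem_span_finite_of_mem_span hpq
  obtain ⟨T, hT, rfl⟩ := Finset.subset_set_image_iff.1 hTQ
  obtain ⟨s, hps, hqs, hTs⟩ : ∃ s : Finset σ, p.vars ⊆ s ∧ q.vars ⊆ s ∧ ∀ g ∈ T, g.vars ⊆ s :=
    ⟨p.vars ∪ q.vars ∪ T.biUnion vars, by grind, by grind,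
      fun g hg => (Finset.subset_biUnion_of_mem vars hg).trans Finset.subset_union_right⟩
  let ι : ↥(s : Set σ) → σ := (↑)
  let Qs := Q.comap (rename ι)
  have hle := map_comap_rename_le f Q ι
  have hE : p * q ∈ (Qs.map (map f)).map (rename ι) := by
    refine Submodule.span_le.2 ?_ hpqT
    intro _ hx
    obtain ⟨g, hgT, rfl⟩ := Finset.mem_image.1 hx
    obtain ⟨g₁, rfl⟩ := exists_rename_eq_of_vars_subset (Finset.coe_subset.2 (hTs g hgT))
    exact map_rename_mem_map_comap_rename f (hT hgT)
  obtain ⟨p₁, rfl⟩ := exists_rename_eq_of_vars_subset (Finset.coe_subset.2 hps)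
  obtain ⟨q₁, rfl⟩ := exists_rename_eq_of_vars_subset (Finset.coe_subset.2 hqs)
  rw [← map_mul] at hE
  have hE₁ : p₁ * q₁ ∈ Qs.map (map f) :=
    (Ideal.comap_map_of_leftInverse (f := rename (R := S) ι) _
      (killCompl_rename_app Subtype.val_injective) _).le hE
  rcases h s Qs (Ideal.comap_isPrime _ _) with hprime | htop
  · exact (hprime.mem_or_mem hE₁).imp (fun h => hle (Ideal.mem_map_of_mem _ h))
      (fun h => hle (Ideal.mem_map_of_mem _ h))
  · refine absurd (top_le_iff.1 ?_) hne
    rwa [← Ideal.map_top (rename (R := S) ι), ← htop]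

theorem StablePrimeExtensionProperty.primeExtensionProperty_mvPolynomial
    (h : StablePrimeExtensionProperty f) : PrimeExtensionProperty (map (σ := σ) f) :=
  PrimeExtensionProperty.mvPolynomial_of_forall_finset fun _ => h.primeExtensionProperty_of_finite

end FiniteVariables

section FiberPresentation
variable {R S : Type*} [CommRing R] [CommRing S] [Algebra R S] {σ : Type*}

theorem MvPolynomial.ideal_map_map_eq_map_includeRight (Q : Ideal (MvPolynomial σ R)) :
    Q.map (map (algebraMap R S)) =
      (Q.map (Algebra.TensorProduct.includeRight : MvPolynomial σ R →ₐ[R] S ⊗[R] _).toRingHom).map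
        (algebraTensorAlgEquiv R S).toRingEquiv.toRingHom := by
  rw [Ideal.map_map]
  congr 1
  ext <;> simp

noncomputable def MvPolynomial.quotientMapEquivTensor (Q : Ideal (MvPolynomial σ R)) :
    (MvPolynomial σ S ⧸ Q.map (map (algebraMap R S))) ≃+* (MvPolynomial σ R ⧸ Q) ⊗[R] S :=
  have hsurj := Algebra.TensorProduct.map_surjective (AlgHom.id R S) (Ideal.Quotient.mkₐ R Q)
    Function.surjective_id (Ideal.Quotient.mkₐ_surjective R Q)
  (Ideal.quotientEquiv _ _ (algebraTensorAlgEquiv R S).toRingEquiv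
      (ideal_map_map_eq_map_includeRight Q)).symm.trans <|
    (Ideal.quotEquivOfEq (by
      rw [Algebra.TensorProduct.lTensor_ker _ (Ideal.Quotient.mkₐ_surjective R Q)]
      exact congrArg _ (Ideal.Quotient.mkₐ_ker R Q).symm)).trans <|
    (Ideal.quotientKerAlgEquivOfSurjective hsurj).toRingEquiv.trans
      (Algebra.TensorProduct.comm R S _).toRingEquiv

theorem Ideal.isPrime_or_eq_top_iff_noZeroDivisors {A : Type*} [CommRing A] (I : Ideal A) :
    I.IsPrime ∨ I = ⊤ ↔ NoZeroDivisors (A ⧸ I) := by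
  rw [noZeroDivisors_iff_isDomain_or_subsingleton, Ideal.Quotient.isDomain_iff_prime,
    Ideal.Quotient.subsingleton_iff]

theorem primeExtensionProperty_map_iff_noZeroDivisors :
    PrimeExtensionProperty (map (σ := σ) (algebraMap R S)) ↔
      ∀ Q : Ideal (MvPolynomial σ R), Q.IsPrime →
        NoZeroDivisors ((MvPolynomial σ R ⧸ Q) ⊗[R] S) := by
  refine forall₂_congr fun Q _ => ?_
  rw [Ideal.isPrime_or_eq_top_iff_noZeroDivisors]
  exact (quotientMapEquivTensor Q).toMulEquiv.noZeroDivisors_iff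

end FiberPresentation

section Fibers
variable {R S : Type*} [CommRing R] [CommRing S] [Algebra R S]

theorem StablePrimeExtensionProperty.noZeroDivisors_tensor
    (h : StablePrimeExtensionProperty (algebraMap R S)) (A : Type*) [CommRing A] [IsDomain A]
    [Algebra R A] : NoZeroDivisors (A ⊗[R] S) := by
  let ε : MvPolynomial A R →ₐ[R] A := aeval id
  have hε : Function.Surjective ε := fun a => ⟨X a, aeval_X _ _⟩
  have := primeExtensionProperty_map_iff_noZeroDivisors.1 h.primeExtensionProperty_mvPolynomial
    (RingHom.ker ε) (RingHom.ker_isPrime _)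
  exact (Algebra.TensorProduct.congr (Ideal.quotientKerAlgEquivOfSurjective hε)
    AlgEquiv.refl).toMulEquiv.noZeroDivisors_iff.1 this

theorem noZeroDivisors_tensor_of_injective [Module.Flat R S] {A K : Type*} [CommRing A]
    [CommRing K] [Algebra R A] [Algebra R K] (g : A →ₐ[R] K) (hg : Function.Injective g)
    [NoZeroDivisors (K ⊗[R] S)] : NoZeroDivisors (A ⊗[R] S) :=
  Function.Injective.noZeroDivisors (Algebra.TensorProduct.map g (AlgHom.id R S))
    (Module.Flat.rTensor_preserves_injective_linearMap g.toLinearMap hg) (map_zero _) (map_mul _)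

end Fibers

theorem noZeroDivisors_tensor_of_flat_of_fibers {R S : Type u} [CommRing R] [CommRing S]
    [Algebra R S] [Module.Flat R S]
    (hfib : ∀ (P : Ideal R) (_ : P.IsPrime) (L : Type u) (_ : Field L)
      (_ : Algebra (ResidueFieldAt P) L) (_ : Algebra R L)
      (_ : IsScalarTower R (ResidueFieldAt P) L), IsDomain (L ⊗[R] S))
    (A : Type u) [CommRing A] [IsDomain A] [Algebra R A] : NoZeroDivisors (A ⊗[R] S) := by
  let P := (⊥ : Ideal A).comap (algebraMap R A)
  let K := (⊥ : Ideal A).ResidueField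
  let _ : Algebra (ResidueFieldAt P) K :=
    (Ideal.ResidueField.map P ⊥ (algebraMap R A) rfl).toAlgebra
  have htower : IsScalarTower R (ResidueFieldAt P) K := .of_algebraMap_eq fun r => by
    rw [RingHom.algebraMap_toAlgebra, Ideal.ResidueField.map_algebraMap,
      IsScalarTower.algebraMap_apply R A K]
  have := hfib P inferInstance K inferInstance _ _ htower
  exact noZeroDivisors_tensor_of_injective (IsScalarTower.toAlgHom R A K)
    (IsFractionRing.injective A K)

theorem stable_pep_and_fibers {R S : Type u} [CommRing R] [CommRing S] [Algebra R S] :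
    (StablePrimeExtensionProperty (algebraMap R S) →
      ∀ (P : Ideal R) (_ : P.IsPrime) (L : Type u) (_ : Field L)
        (_ : Algebra (ResidueFieldAt P) L) (_ : Algebra R L)
        (_ : IsScalarTower R (ResidueFieldAt P) L),
        IsDomain (L ⊗[R] S) ∨ Subsingleton (L ⊗[R] S))
    ∧
    (Module.Flat R S →
      (∀ (P : Ideal R) (_ : P.IsPrime) (L : Type u) (_ : Field L)
        (_ : Algebra (ResidueFieldAt P) L) (_ : Algebra R L)
        (_ : IsScalarTower R (ResidueFieldAt P) L),
        IsDomain (L ⊗[R] S)) →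
      StablePrimeExtensionProperty (algebraMap R S)) := by
  refine ⟨fun h _ _ L _ _ _ _ => ?_, fun _ hfib n => ?_⟩
  · exact (noZeroDivisors_iff_isDomain_or_subsingleton _).1 (h.noZeroDivisors_tensor L)
  · exact primeExtensionProperty_map_iff_noZeroDivisors.2 fun Q _ =>
      noZeroDivisors_tensor_of_flat_of_fibers hfib (MvPolynomial (Fin n) R ⧸ Q)
end

section
/- Let R be a commutative ring and S an R-module such that (i) for every f ∈ R, the annihilator of f in S equals (Ann_R f)·S, and (ii) for every pair of ideals I, J of R, IS ∩ JS = (I ∩ J)S. Then S is a flat R-module. -/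
/-!
By the ideal criterion it suffices that `I ⊗ S → S` is injective for every finitely generated
ideal `I`, and we add generators one at a time. Passing from `J` to `(f) + J`, an element of
`((f) + J) ⊗ S` can be written `y + f ⊗ s` with `y ∈ J ⊗ S`; if it maps to zero then
`f s ∈ JS`. The two hypotheses give `s ∈ (J : f) S`: indeed
`f s ∈ (f)S ∩ JS = ((f) ∩ J) S = f (J : f) S`, so `f s = f s₀` with `s₀ ∈ (J : f) S`, and
`s - s₀ ∈ Ann_S f = (Ann_R f) S ⊆ (J : f) S`.
Then `f ⊗ s` already comes from `J ⊗ S`, and injectivity for `J` finishes the step.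
-/

open Submodule TensorProduct LinearMap Pointwise

namespace Ideal

variable {R : Type*} [CommRing R]

theorem span_singleton_inf_eq_span_singleton_mul_colon (f : R) (J : Ideal R) :
    span {f} ⊓ J = span {f} * J.colon (span {f}) := by
  apply le_antisymm
  · rintro a ⟨haf, haJ⟩
    obtain ⟨b, rfl⟩ := mem_span_singleton'.1 haf
    rw [mul_comm b f]
    exact mul_mem_mul (mem_span_singleton_self f) (mem_colon_span_singleton.2 haJ)
  · refine mul_le.2 fun a ha b hb => ⟨mul_mem_right b _ ha, ?_⟩
    obtain ⟨c, rfl⟩ := mem_span_singleton'.1 ha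
    rw [mul_assoc, mul_comm f]
    exact mul_mem_left _ c (mem_colon_span_singleton.1 hb)

theorem torsionBy_le_colon_span_singleton (f : R) (J : Ideal R) :
    (torsionBy R R f : Ideal R) ≤ J.colon (span {f}) := fun a ha => by
  have hfa : f * a = 0 := (mem_torsionBy_iff f a).1 ha
  rw [mem_colon_span_singleton, mul_comm, hfa]
  exact J.zero_mem

variable (M : Type*) [AddCommGroup M] [Module R M]

noncomputable def tensorMul (I : Ideal R) : I ⊗[R] M →ₗ[R] M :=
  lift ((lsmul R M).comp I.subtype)

variable {M}

@[simp]
theorem tensorMul_tmul (I : Ideal R) (i : I) (m : M) : I.tensorMul M (i ⊗ₜ m) = (i : R) • m :=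
  rfl

theorem tensorMul_comp_rTensor_inclusion {I J : Ideal R} (h : J ≤ I) :
    I.tensorMul M ∘ₗ rTensor M (inclusion h) = J.tensorMul M := by
  ext
  simp

theorem tensorMul_mem_smul_top (J : Ideal R) (x : J ⊗[R] M) :
    J.tensorMul M x ∈ J • (⊤ : Submodule R M) := by
  induction x using TensorProduct.induction_on with
  | zero => simp
  | tmul j m => exact smul_mem_smul j.2 trivial
  | add x y hx hy => exact (map_add (J.tensorMul M) x y) ▸ add_mem hx hy

theorem exists_eq_rTensor_inclusion_add_tmul (f : R) (J : Ideal R) (x : ↥(span {f} ⊔ J) ⊗[R] M) :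
    ∃ (y : J ⊗[R] M) (m : M), x = rTensor M (inclusion le_sup_right) y +
      (⟨f, mem_sup_left (mem_span_singleton_self f)⟩ : ↥(span {f} ⊔ J)) ⊗ₜ m := by
  induction x using TensorProduct.induction_on with
  | zero => exact ⟨0, 0, by simp⟩
  | tmul i m =>
    obtain ⟨a, ha, b, hb, hab⟩ := mem_sup.1 i.2
    obtain ⟨c, rfl⟩ := mem_span_singleton'.1 ha
    refine ⟨(⟨b, hb⟩ : J) ⊗ₜ m, c • m, ?_⟩
    rw [rTensor_tmul, ← smul_tmul, ← add_tmul]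
    congr 1
    ext
    simp [← hab, add_comm]
  | add x x' hx hx' =>
    obtain ⟨y, m, rfl⟩ := hx
    obtain ⟨y', m', rfl⟩ := hx'
    exact ⟨y + y', m + m', by rw [map_add, tmul_add]; abel⟩

theorem tmul_mem_range_rTensor_inclusion {I J : Ideal R} (h : J ≤ I) {f : R} (hf : f ∈ I)
    {m : M} (hm : m ∈ J.colon (span {f}) • (⊤ : Submodule R M)) :
    (⟨f, hf⟩ : I) ⊗ₜ m ∈ range (rTensor M (inclusion h)) := by
  refine smul_induction_on hm (fun r hr m _ => ?_) fun m m' hm hm' => ?_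
  · refine ⟨(⟨r * f, mem_colon_span_singleton.1 hr⟩ : J) ⊗ₜ m, ?_⟩
    rw [rTensor_tmul, ← smul_tmul]
    rfl
  · rw [tmul_add]
    exact add_mem hm hm'

theorem injective_tensorMul_sup_span_singleton {f : R} {J : Ideal R}
    (hJ : Function.Injective (J.tensorMul M))
    (hcolon : ∀ m : M, f • m ∈ J • (⊤ : Submodule R M) →
      m ∈ J.colon (span {f}) • (⊤ : Submodule R M)) :
    Function.Injective ((span {f} ⊔ J).tensorMul M) := by
  have hcomp := tensorMul_comp_rTensor_inclusion (M := M) (le_sup_right : J ≤ span {f} ⊔ J)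
  rw [injective_iff_map_eq_zero] at hJ ⊢
  intro x hx
  obtain ⟨y, m, rfl⟩ := exists_eq_rTensor_inclusion_add_tmul f J x
  have hsum : J.tensorMul M y + f • m = 0 := by
    rwa [map_add, ← comp_apply, hcomp, tensorMul_tmul] at hx
  have hfm : f • m ∈ J • (⊤ : Submodule R M) :=
    (eq_neg_of_add_eq_zero_right hsum) ▸ neg_mem (tensorMul_mem_smul_top J y)
  obtain ⟨z, hz⟩ := tmul_mem_range_rTensor_inclusion le_sup_right
    (mem_sup_left (mem_span_singleton_self f)) (hcolon m hfm)
  rw [← hz, ← map_add] at hx ⊢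
  rw [← comp_apply, hcomp] at hx
  rw [hJ _ hx, map_zero]

theorem mem_colon_smul_top_of_smul_mem {f : R} {J : Ideal R}
    (htors : torsionBy R M f ≤ (torsionBy R R f : Ideal R) • (⊤ : Submodule R M))
    (hinf : (span {f} • (⊤ : Submodule R M)) ⊓ J • ⊤ ≤ (span {f} ⊓ J) • (⊤ : Submodule R M))
    {m : M} (hm : f • m ∈ J • (⊤ : Submodule R M)) :
    m ∈ J.colon (span {f}) • (⊤ : Submodule R M) := by
  have hfm : f • m ∈ f • (J.colon (span {f}) • (⊤ : Submodule R M)) := by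
    have := hinf ⟨smul_mem_smul (mem_span_singleton_self f) trivial, hm⟩
    rwa [span_singleton_inf_eq_span_singleton_mul_colon, Submodule.mul_smul,
      ideal_span_singleton_smul] at this
  obtain ⟨m₀, hm₀, hfm₀⟩ := (mem_smul_pointwise_iff_exists _ _ _).1 hfm
  have hdiff : m - m₀ ∈ torsionBy R M f := by
    rw [mem_torsionBy_iff, smul_sub, hfm₀, sub_self]
  have := add_mem (smul_mono_left (torsionBy_le_colon_span_singleton f J) (htors hdiff)) hm₀
  rwa [sub_add_cancel] at this

end Ideal

theorem flat_of_annihilator_and_ideal_intersection_conditions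
    {R : Type*} [CommRing R] (S : Type*) [AddCommGroup S] [Module R S]
    (h1 : ∀ f : R,
      Submodule.torsionBy R S f = (Submodule.torsionBy R R f : Ideal R) • (⊤ : Submodule R S))
    (h2 : ∀ I J : Ideal R,
      (I • (⊤ : Submodule R S)) ⊓ (J • (⊤ : Submodule R S)) = (I ⊓ J) • (⊤ : Submodule R S)) :
    Module.Flat R S := by
  refine Module.Flat.iff_lift_lsmul_comp_subtype_injective.2 ?_
  rintro _ ⟨T, rfl⟩
  change Function.Injective (Ideal.tensorMul S (span R (T : Set R)))
  classical
  induction T using Finset.induction_on with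
  | empty =>
    rw [Finset.coe_empty, span_empty]
    exact Function.injective_of_subsingleton _
  | insert f T _ ih =>
    rw [Finset.coe_insert, span_insert]
    exact Ideal.injective_tensorMul_sup_span_singleton ih fun m hm =>
      Ideal.mem_colon_smul_top_of_smul_mem (h1 f).le (h2 _ _).le hm
end

section
/- Let R be a commutative ring and S an R-module such that for every pair of submodules M₁, M₂ of R² (the free module of rank 2), the images of S ⊗_R M₁ and S ⊗_R M₂ in S ⊗_R R² satisfy (image of S ⊗_R (M₁ ∩ M₂)) = (image of S ⊗_R M₁) ∩ (image of S ⊗_R M₂). Then S is a flat R-module. -/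
/-!
By the equational criterion it suffices to show that every relation `∑ᵢ fᵢ xᵢ = 0` in `S` is
trivial; induct on its length. Let `I` be the ideal generated by `f₁, …, fₙ`, so `f₀ x₀ ∈ I S`.
For `M₁ = R (1, f₀)` and `M₂ = R × I`, the element `x₀ ⊗ (1, f₀)` lies in the images of both
`S ⊗ M₁` and `S ⊗ M₂`, hence comes from `S ⊗ (M₁ ∩ M₂)`; projecting to the first factor writes
`x₀ = ∑ⱼ uⱼ tⱼ` with `uⱼ f₀ ∈ I`. Writing `uⱼ f₀ = ∑ᵢ cⱼᵢ fᵢ` turns the relation into the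
shorter relation `∑ᵢ fᵢ (xᵢ + ∑ⱼ cⱼᵢ tⱼ) = 0`, and a trivialisation of it extends to one of the
original relation.
-/

open TensorProduct

namespace Module

variable {R M : Type*} [CommRing R] [AddCommGroup M] [Module R M]

theorem isTrivialRelation_of_cons {n m : ℕ} {f : Fin (n + 1) → R} {x : Fin (n + 1) → M}
    (u : Fin m → R) (t : Fin m → M) (c : Fin m → Fin n → R)
    (hx : x 0 = ∑ j, u j • t j) (hc : ∀ j, ∑ i, c j i * f i.succ = u j * f 0)
    (htriv : IsTrivialRelation (fun i ↦ f i.succ) (fun i ↦ x i.succ + ∑ j, c j i • t j)) :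
    IsTrivialRelation f x := by
  obtain ⟨k, b, y, hxy, hfb⟩ := htriv
  refine ⟨m + k, Fin.cons (Fin.append u 0) fun i ↦ Fin.append (fun j ↦ -c j i) (b i),
    Fin.append t y, Fin.cases ?_ fun i ↦ ?_, Fin.addCases (fun j ↦ ?_) fun l ↦ ?_⟩
  · simpa [Fin.sum_univ_add] using hx
  · simp [Fin.sum_univ_add, ← hxy i]
  · simp [Fin.sum_univ_succ, mul_neg, ← hc j, mul_comm]
  · simpa [Fin.sum_univ_succ] using hfb l

end Module

section

variable {R S : Type*} [CommRing R] [AddCommGroup S] [Module R S]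

theorem tmul_mem_range_lTensor_subtype {M : Type*} [AddCommGroup M] [Module R M]
    {N : Submodule R M} (s : S) {m : M} (hm : m ∈ N) :
    s ⊗ₜ[R] m ∈ LinearMap.range (N.subtype.lTensor S) :=
  ⟨s ⊗ₜ ⟨m, hm⟩, rfl⟩

theorem mul_mem_of_mem_span_singleton_inf_prod {I : Ideal R} {a : R} {p : R × R}
    (hp : p ∈ Submodule.span R {((1 : R), a)} ⊓ (⊤ : Submodule R R).prod I) : p.1 * a ∈ I := by
  obtain ⟨hp₁, -, hp₂⟩ := hp
  obtain ⟨r, rfl⟩ := Submodule.mem_span_singleton.mp hp₁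
  simpa using hp₂

theorem exists_sum_smul_of_smul_mem_smul_top
    (h : ∀ M₁ M₂ : Submodule R (R × R),
      LinearMap.range (LinearMap.lTensor S (M₁ ⊓ M₂).subtype) =
        LinearMap.range (LinearMap.lTensor S M₁.subtype) ⊓
          LinearMap.range (LinearMap.lTensor S M₂.subtype))
    {I : Ideal R} {a : R} {s : S} (hs : a • s ∈ I • (⊤ : Submodule R S)) :
    ∃ (k : ℕ) (u : Fin k → R) (t : Fin k → S), (∀ j, u j * a ∈ I) ∧ s = ∑ j, u j • t j := by
  set M₁ : Submodule R (R × R) := Submodule.span R {(1, a)}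
  set M₂ : Submodule R (R × R) := (⊤ : Submodule R R).prod I
  have hz₁ : s ⊗ₜ[R] (1, a) ∈ LinearMap.range (M₁.subtype.lTensor S) :=
    tmul_mem_range_lTensor_subtype s (Submodule.mem_span_singleton_self _)
  have hz₂ : s ⊗ₜ[R] (1, a) ∈ LinearMap.range (M₂.subtype.lTensor S) := by
    have hsplit : s ⊗ₜ[R] ((1 : R), a) = s ⊗ₜ (1, 0) + (a • s) ⊗ₜ (0, 1) := by
      rw [smul_tmul, ← tmul_add]; simp
    rw [hsplit]
    refine add_mem (tmul_mem_range_lTensor_subtype s ⟨trivial, zero_mem I⟩) ?_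
    refine Submodule.smul_induction_on hs (fun r hr n _ ↦ ?_) fun _ _ ↦ ?_
    · rw [smul_tmul]
      exact tmul_mem_range_lTensor_subtype n ⟨trivial, by simpa using hr⟩
    · rw [add_tmul]; exact add_mem
  obtain ⟨w, hw⟩ : s ⊗ₜ[R] (1, a) ∈ LinearMap.range ((M₁ ⊓ M₂).subtype.lTensor S) := by
    rw [h]; exact ⟨hz₁, hz₂⟩
  obtain ⟨k, t, p, rfl⟩ := exists_sum_tmul_eq w
  refine ⟨k, fun j ↦ (p j : R × R).1, t,
    fun j ↦ mul_mem_of_mem_span_singleton_inf_prod (p j).2, ?_⟩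
  have hfst := congr(TensorProduct.rid R S (LinearMap.lTensor S (LinearMap.fst R R R) $hw))
  simpa using hfst.symm

theorem isTrivialRelation_of_range_lTensor_inf
    (h : ∀ M₁ M₂ : Submodule R (R × R),
      LinearMap.range (LinearMap.lTensor S (M₁ ⊓ M₂).subtype) =
        LinearMap.range (LinearMap.lTensor S M₁.subtype) ⊓
          LinearMap.range (LinearMap.lTensor S M₂.subtype))
    {n : ℕ} {f : Fin n → R} {x : Fin n → S} (hfx : ∑ i, f i • x i = 0) :
    Module.IsTrivialRelation f x := by
  induction n with
  | zero => exact ⟨0, finZeroElim, finZeroElim, finZeroElim, finZeroElim⟩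
  | succ n ih =>
    set I : Ideal R := Ideal.span (Set.range fun i : Fin n ↦ f i.succ)
    have hx₀ : f 0 • x 0 ∈ I • (⊤ : Submodule R S) := by
      rw [Fin.sum_univ_succ, add_eq_zero_iff_eq_neg] at hfx
      rw [hfx]
      exact neg_mem <| Submodule.sum_mem _ fun i _ ↦
        Submodule.smul_mem_smul (Ideal.subset_span ⟨i, rfl⟩) trivial
    obtain ⟨m, u, t, hu, hx⟩ := exists_sum_smul_of_smul_mem_smul_top h hx₀
    choose c hc using fun j ↦ (Submodule.mem_span_range_iff_exists_fun R).mp (hu j)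
    refine Module.isTrivialRelation_of_cons u t c hx hc (ih ?_)
    calc ∑ i, f i.succ • (x i.succ + ∑ j, c j i • t j)
        = ∑ i : Fin n, f i.succ • x i.succ + ∑ j, (∑ i, c j i • f i.succ) • t j := by
          simp only [smul_add, Finset.sum_add_distrib, Finset.smul_sum, Finset.sum_smul, smul_smul,
            smul_eq_mul, mul_comm]
          rw [Finset.sum_comm]
      _ = ∑ i : Fin n, f i.succ • x i.succ + f 0 • x 0 := by
          simp only [hc, hx, Finset.smul_sum, smul_smul, mul_comm]
      _ = 0 := by rw [← hfx, Fin.sum_univ_succ, add_comm]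

end

theorem flat_of_finite_intersection_condition_on_rank_two
    {R : Type*} [CommRing R] (S : Type*) [AddCommGroup S] [Module R S]
    (h : ∀ M₁ M₂ : Submodule R (R × R),
      LinearMap.range (LinearMap.lTensor S (M₁ ⊓ M₂).subtype) =
        LinearMap.range (LinearMap.lTensor S M₁.subtype) ⊓
          LinearMap.range (LinearMap.lTensor S M₂.subtype)) :
    Module.Flat R S :=
  Module.Flat.of_forall_isTrivialRelation (isTrivialRelation_of_range_lTensor_inf h)
end

section
/- Let R be a Noetherian commutative ring and {S_μ} an arbitrary family of R-modules each of which is intersection flat. Then the product ∏_μ S_μ is intersection flat over R. -/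
/-!
Over a Noetherian ring every finitely generated module `M` is finitely presented, and for such `M`
the canonical map `(∏ᵢ Sᵢ) ⊗ M → ∏ᵢ (Sᵢ ⊗ M)` is an isomorphism: it is one for `M = Rⁿ`, and both
sides are right exact in `M`, so the five lemma applies to a presentation of `M`. Through this
isomorphism, tensoring an inclusion `N ⊆ M` with `∏ᵢ Sᵢ` becomes the product of the maps
`Sᵢ ⊗ N → Sᵢ ⊗ M`. Hence injectivity on ideals (flatness) and the images of the `Sᵢ ⊗ Mₗ`, together
with their intersections, are all computed componentwise.
-/

/-- An `R`-module `S` is intersection flat if it is flat and tensoring with `S` commutes with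
arbitrary intersections of families of submodules of any finitely generated module. -/
def IntersectionFlat (R : Type u) (S : Type v) [CommRing R] [AddCommGroup S]
    [Module R S] : Prop :=
  Module.Flat R S ∧
    ∀ (M : Type u) (_ : AddCommGroup M) (_ : Module R M) (_ : Module.Finite R M)
      (ι : Type u) (Mf : ι → Submodule R M),
      LinearMap.range (LinearMap.lTensor S (⨅ l, Mf l).subtype) =
        ⨅ l, LinearMap.range (LinearMap.lTensor S (Mf l).subtype)

open TensorProduct LinearMap Function

theorem Function.Exact.piMap {ι : Type*} {α β γ : ι → Type*} [∀ i, Zero (γ i)]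
    {f : ∀ i, α i → β i} {g : ∀ i, β i → γ i} (h : ∀ i, Exact (f i) (g i)) :
    Exact (Pi.map f) (Pi.map g) := by
  intro y
  simp only [Set.range_piMap, Set.mem_univ_pi, funext_iff, Pi.map_apply, Pi.zero_apply, h _ _]

namespace TensorProduct

variable {R : Type*} [CommRing R] {ι : Type*} (S : ι → Type*)
  [∀ i, AddCommGroup (S i)] [∀ i, Module R (S i)]
  {M N : Type*} [AddCommGroup M] [Module R M] [AddCommGroup N] [Module R N]

variable (R M) in
noncomputable def piLeftHom : (∀ i, S i) ⊗[R] M →ₗ[R] ∀ i, S i ⊗[R] M :=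
  LinearMap.pi fun i ↦ (proj i).rTensor M

@[simp]
theorem piLeftHom_tmul (s : ∀ i, S i) (m : M) :
    piLeftHom R S M (s ⊗ₜ m) = fun i ↦ s i ⊗ₜ m :=
  rfl

theorem piMap_lTensor_comp_piLeftHom (f : N →ₗ[R] M) :
    piMap (fun i ↦ f.lTensor (S i)) ∘ₗ piLeftHom R S N = piLeftHom R S M ∘ₗ f.lTensor _ :=
  TensorProduct.ext' fun _ _ ↦ rfl

theorem piLeftHom_bijective_of_finite (κ : Type*) [Finite κ] :
    Bijective (piLeftHom R S (κ → R)) := by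
  have := Fintype.ofFinite κ
  classical
  have key (x) (i) (j : κ) : piScalarRight R R (S i) κ (piLeftHom R S (κ → R) x i) j =
      piScalarRight R R (∀ i, S i) κ x j i := by
    induction x using TensorProduct.induction_on with
    | zero => simp
    | tmul s g => simp [piScalarRight_apply, piScalarRightHom_tmul]
    | add a b ha hb => simp only [map_add, Pi.add_apply, ha, hb]
  have hcomm : Pi.map (fun i ↦ piScalarRight R R (S i) κ) ∘ piLeftHom R S (κ → R) =
      Equiv.piComm _ ∘ piScalarRight R R (∀ i, S i) κ := by
    funext x i j
    exact key x i j
  rw [← Bijective.of_comp_iff' (Bijective.piMap fun i ↦ (piScalarRight R R (S i) κ).bijective),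
    hcomm]
  exact (Equiv.bijective _).comp (LinearEquiv.bijective _)

theorem piLeftHom_surjective [Module.Finite R M] : Surjective (piLeftHom R S M) := by
  obtain ⟨n, f, hf⟩ := Module.Finite.exists_fin' R M
  have hcomp : Surjective (piLeftHom R S M ∘ f.lTensor _) := by
    rw [← coe_comp, ← piMap_lTensor_comp_piLeftHom, coe_comp, coe_piMap]
    exact (Surjective.piMap fun i ↦ lTensor_surjective _ hf).comp
      (piLeftHom_bijective_of_finite S _).surjective
  exact hcomp.of_comp

theorem piLeftHom_bijective [Module.FinitePresentation R M] : Bijective (piLeftHom R S M) := by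
  obtain ⟨n, f, hf⟩ := Module.Finite.exists_fin' R M
  have : Module.Finite R (ker f) := .of_fg (Module.FinitePresentation.fg_ker f hf)
  exact bijective_of_surjective_of_bijective_of_right_exact
    ((ker f).subtype.lTensor _) (f.lTensor _)
    (piMap fun i ↦ (ker f).subtype.lTensor (S i)) (piMap fun i ↦ f.lTensor (S i))
    _ _ _ (piMap_lTensor_comp_piLeftHom S _) (piMap_lTensor_comp_piLeftHom S f)
    (lTensor_exact _ f.exact_subtype_ker_map hf)
    (Exact.piMap fun i ↦ lTensor_exact _ f.exact_subtype_ker_map hf)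
    (piLeftHom_surjective S) (piLeftHom_bijective_of_finite S _)
    (lTensor_surjective _ hf) (Surjective.piMap fun i ↦ lTensor_surjective _ hf)

theorem range_lTensor_eq_comap_piLeftHom [Module.Finite R N] [Module.FinitePresentation R M]
    (f : N →ₗ[R] M) :
    range (f.lTensor (∀ i, S i)) =
      (Submodule.pi Set.univ fun i ↦ range (f.lTensor (S i))).comap (piLeftHom R S M) := by
  rw [← Submodule.comap_map_eq_of_injective (piLeftHom_bijective S).injective (range _),
    ← range_comp, ← piMap_lTensor_comp_piLeftHom, range_comp,
    range_eq_top.mpr (piLeftHom_surjective S), Submodule.map_top]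
  congr 1
  exact SetLike.coe_injective (Set.range_piMap _)

end TensorProduct

theorem Module.Flat.pi_of_isNoetherianRing {R : Type*} [CommRing R] [IsNoetherianRing R]
    {ι : Type*} (S : ι → Type*) [∀ i, AddCommGroup (S i)] [∀ i, Module R (S i)]
    [∀ i, Module.Flat R (S i)] : Module.Flat R (∀ i, S i) := by
  refine Module.Flat.iff_lTensor_injective'.mpr fun I ↦ ?_
  have := Module.finitePresentation_of_finite R I
  have h : Function.Injective (piLeftHom R S R ∘ I.subtype.lTensor _) := by
    rw [← coe_comp, ← piMap_lTensor_comp_piLeftHom, coe_comp, coe_piMap]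
    exact (Injective.piMap fun i ↦ Module.Flat.lTensor_preserves_injective_linearMap _
      I.injective_subtype).comp (piLeftHom_bijective S).injective
  exact h.of_comp

theorem intersectionFlat_pi {R : Type u} [CommRing R] [IsNoetherianRing R]
    {μ : Type w} (S : μ → Type v) [∀ i, AddCommGroup (S i)] [∀ i, Module R (S i)]
    (hS : ∀ i, IntersectionFlat R (S i)) :
    IntersectionFlat R (∀ i, S i) := by
  have := fun i ↦ (hS i).1
  refine ⟨Module.Flat.pi_of_isNoetherianRing S, fun M _ _ _ ι Mf ↦ ?_⟩
  have := Module.finitePresentation_of_finite R M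
  simp_rw [range_lTensor_eq_comap_piLeftHom, (hS _).2 M _ _ _ ι Mf, ← Submodule.comap_iInf]
  congr 1
  ext x
  simp only [Submodule.mem_pi, Set.mem_univ, forall_const, Submodule.mem_iInf]
  exact forall_comm
end
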